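/- In two-way r-bootstrap percolation on T_L^d (2 ≤ r ≤ d, L sufficiently large), there exists a constant T = T(d,r) (independent of L) such that any initial configuration with fewer than 2^{r-1} black nodes becomes fully white within T rounds. -/

import Mathlib

open scoped Classical ENNReal
open MeasureTheory Filter

/-- Vertices of the `d`-dimensional torus with side length `L`. -/
abbrev TorusV (d L : ℕ) := Fin d → ZMod L

/-- The `d`-dimensional torus graph `T_L^d`: two nodes are adjacent iff they differ
by `±1 (mod L)` in exactly one coordinate. -/
def torusGraph (d L : ℕ) : SimpleGraph (TorusV d L) where
  Adj v u := v ≠ u ∧ ∃ j, (u j = v j + 1 ∨ u j = v j - 1) ∧ ∀ k, k ≠ j → u k = v k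
  symm := ⟨by
    rintro v u ⟨hne, j, hj, hk⟩
    refine ⟨hne.symm, j, ?_, fun k hkj => (hk k hkj).symm⟩
    rcases hj with h | h
    · right; rw [h]; ring
    · left; rw [h]; ring⟩
  loopless := ⟨by rintro v ⟨hne, -⟩; exact hne rfl⟩

/-- One round of two-way `r`-bootstrap percolation on a finite graph:
a node is black in the next round iff it has at least `r` black neighbors. -/
noncomputable def gStep {V : Type*} [Fintype V] (G : SimpleGraph V) (r : ℕ)
    (C : V → Bool) : V → Bool :=
  fun v => decide (r ≤ (Finset.univ.filter (fun u => G.Adj v u ∧ C u = true)).card)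

/-- One round of (ordinary) `r`-bootstrap percolation: black nodes stay black, and a white
node becomes black iff it has at least `r` black neighbors. -/
noncomputable def bpStep {V : Type*} [Fintype V] (G : SimpleGraph V) (r : ℕ)
    (C : V → Bool) : V → Bool :=
  fun v => C v || decide (r ≤ (Finset.univ.filter (fun u => G.Adj v u ∧ C u = true)).card)

/-- One round of the majority model: each node adopts the most frequent color among its
neighbors, keeping its own color in case of a tie. -/
noncomputable def majStep {V : Type*} [Fintype V] (G : SimpleGraph V)
    (C : V → Bool) : V → Bool :=
  fun v =>
    let b := (Finset.univ.filter (fun u => G.Adj v u ∧ C u = true)).card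
    let w := (Finset.univ.filter (fun u => G.Adj v u ∧ C u = false)).card
    if w < b then true else if b < w then false else C v

/-- `S` is an `(r,c)`-robust set in two-way `r`-BP: whenever all nodes of `S` have color `c`,
they keep color `c` in all subsequent configurations. (`true` = black, `false` = white.) -/
noncomputable def isRobust {V : Type*} [Fintype V] (G : SimpleGraph V) (r : ℕ) (c : Bool)
    (S : Finset V) : Prop :=
  ∀ C : V → Bool, (∀ v ∈ S, C v = c) → ∀ t, ∀ v ∈ S, (gStep G r)^[t] C v = c

/-- `S` is a b-eternal set in two-way `r`-BP: whenever all nodes of `S` are black, every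
subsequent configuration contains at least one black node. -/
noncomputable def isBEternal {V : Type*} [Fintype V] (G : SimpleGraph V) (r : ℕ)
    (S : Finset V) : Prop :=
  ∀ C : V → Bool, (∀ v ∈ S, C v = true) → ∀ t, ∃ v, (gStep G r)^[t] C v = true

/-- The node of a hyper-square at start `i` obtained by incrementing the coordinates in `S`. -/
def hsNode {d L : ℕ} (i : TorusV d L) (S : Finset (Fin d)) : TorusV d L :=
  fun j => if j ∈ S then i j + 1 else i j

/-- The hyper-square with starting node `i` and coordinate set `J` (an `J.card`-dimensional
hyper-square). -/
noncomputable def hyperSquare {d L : ℕ} (i : TorusV d L) (J : Finset (Fin d)) :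
    Finset (TorusV d L) :=
  J.powerset.image (hsNode i)

/-- The even-part of the hyper-square: nodes differing from the start in an even number of
coordinates. -/
noncomputable def evenPart {d L : ℕ} (i : TorusV d L) (J : Finset (Fin d)) :
    Finset (TorusV d L) :=
  (J.powerset.filter (fun S => Even S.card)).image (hsNode i)

/-- The odd-part of the hyper-square: nodes differing from the start in an odd number of
coordinates. -/
noncomputable def oddPart {d L : ℕ} (i : TorusV d L) (J : Finset (Fin d)) :
    Finset (TorusV d L) :=
  (J.powerset.filter (fun S => Odd S.card)).image (hsNode i)

/-- The hyper-rectangle of size `l 0 × ⋯ × l (d-1)` starting at node `i`. -/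
noncomputable def hyperRect {d L : ℕ} [NeZero L] (i : TorusV d L) (l : Fin d → ℕ) :
    Finset (TorusV d L) :=
  Finset.univ.filter (fun v => ∀ j, ∃ m : ℕ, m ≤ l j ∧ v j = i j + (m : ZMod L))

/-- The parity of a hyper-square of the tiling: parity of the sum of the last `d - r`
coordinates of its starting node. -/
def tpar (d L r : ℕ) (i : TorusV d L) : ℕ :=
  (∑ j ∈ Finset.univ.filter (fun j : Fin d => r ≤ (j : ℕ)), (i j).val) % 2

/-- A hyper-square of the tiling (start `i`, coordinate set = first `r` coordinates) is
occupied: its even-part is fully black if its parity is even, and its odd-part is fully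
black if its parity is odd. -/
noncomputable def occupiedHS (d L r : ℕ) (i : TorusV d L) (C : TorusV d L → Bool) : Prop :=
  if tpar d L r i = 0 then
    ∀ v ∈ evenPart i (Finset.univ.filter (fun j : Fin d => (j : ℕ) < r)), C v = true
  else
    ∀ v ∈ oddPart i (Finset.univ.filter (fun j : Fin d => (j : ℕ) < r)), C v = true

/-- The Bernoulli measure on `Bool` with success (black) probability `p` (clamped to `1`). -/
noncomputable def bernoulliMeasure (p : ℝ≥0∞) : Measure Bool :=
  (PMF.bernoulli (min p 1).toNNReal
    ((ENNReal.toNNReal_mono ENNReal.one_ne_top (min_le_right p 1)).trans_eq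
      ENNReal.toNNReal_one)).toMeasure

/-- The product measure on configurations: each node is independently black with
probability `p`. -/
noncomputable def productMeasure (V : Type*) [Fintype V] (p : ℝ≥0∞) :
    Measure (V → Bool) :=
  Measure.pi (fun _ : V => bernoulliMeasure p)


/-!
A node that is black in round `t + 1` of two-way `r`-BP has `r` black neighbours in round `t`;
as long as `t + 1 < r`, two of them are distinct, and a slab `{w | w j ∈ {a, a + 1}}` of the torus
separates them. Every node has at most one neighbour across such a slab, so running the process
on either side with the other side frozen black loses at most one black neighbour per node and
per cut, while it only makes more nodes black. Induction on `t` then yields `2 ^ t` initially black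
nodes behind any node black in round `t < r`; with fewer than `2 ^ (r - 1)` of them, round `r - 1`
is all white.
-/

open Finset

namespace SimpleGraph

variable {V : Type*} (G : SimpleGraph V)

/-- Every vertex has at most one neighbour on the other side of `A`. -/
def IsThinCut (A : Set V) : Prop :=
  ∀ ⦃w x y : V⦄, G.Adj w x → G.Adj w y → (x ∈ A ↔ w ∉ A) → (y ∈ A ↔ w ∉ A) → x = y

def ThinCutsSeparate : Prop :=
  ∀ ⦃u₁ u₂ : V⦄, u₁ ≠ u₂ → ∃ A : Set V, G.IsThinCut A ∧ u₁ ∈ A ∧ u₂ ∉ A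

variable {G}

lemma IsThinCut.compl {A : Set V} (hA : G.IsThinCut A) : G.IsThinCut Aᶜ :=
  fun _ _ _ hx hy hxA hyA => hA hx hy (by simp only [Set.mem_compl_iff] at hxA; tauto)
    (by simp only [Set.mem_compl_iff] at hyA; tauto)

variable [Fintype V]

variable (G) in
noncomputable def boundaryDegree (H : Finset V) (w : V) : ℕ :=
  #{u | G.Adj w u ∧ u ∉ H}

lemma IsThinCut.boundaryDegree_filter_le {A : Set V} (hA : G.IsThinCut A) (H : Finset V)
    {w : V} (hw : w ∈ A) : G.boundaryDegree {u ∈ H | u ∈ A} w ≤ G.boundaryDegree H w + 1 := by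
  have hsub : ({u | G.Adj w u ∧ u ∉ {u ∈ H | u ∈ A}} : Finset V) ⊆
      ({u | G.Adj w u ∧ u ∉ H} : Finset V) ∪ ({u | G.Adj w u ∧ u ∉ A} : Finset V) := by
    intro u
    simp only [mem_union, mem_filter, mem_univ, true_and]
    tauto
  have hacross : #({u | G.Adj w u ∧ u ∉ A} : Finset V) ≤ 1 :=
    card_le_one.2 fun x hx y hy => by
      simp only [mem_filter, mem_univ, true_and] at hx hy
      exact hA hx.1 hy.1 (by tauto) (by tauto)
  exact (card_le_card hsub).trans <| (card_union_le _ _).trans <| Nat.add_le_add_left hacross _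

end SimpleGraph

section BoxedPercolation

variable {V : Type*} [Fintype V] {G : SimpleGraph V} {r : ℕ}

lemma gStep_mono : Monotone (gStep G r) := by
  intro C C' hC v
  simp only [gStep, Bool.le_iff_imp, decide_eq_true_eq]
  refine fun h => h.trans (card_le_card fun u => ?_)
  simp only [mem_filter, mem_univ, true_and]
  exact fun hu => ⟨hu.1, Bool.le_iff_imp.1 (hC u) hu.2⟩

variable (G r) in
noncomputable def boxStep (H : Finset V) (C : V → Bool) : V → Bool :=
  gStep G r fun u => if u ∈ H then C u else true

lemma boxStep_univ : boxStep G r univ = gStep G r := by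
  funext C
  simp only [boxStep, mem_univ, if_true]

lemma boxStep_iterate_le_of_subset {H' H : Finset V} (hH : H' ⊆ H) (C : V → Bool) (t : ℕ) :
    (boxStep G r H)^[t] C ≤ (boxStep G r H')^[t] C := by
  induction t with
  | zero => exact le_rfl
  | succ t ih =>
    rw [Function.iterate_succ_apply', Function.iterate_succ_apply']
    refine gStep_mono fun u => ?_
    by_cases hu : u ∈ H'
    · simp only [hu, hH hu, if_true]; exact ih u
    · simp [hu]

lemma le_boundaryDegree_add_of_boxStep {H : Finset V} {C : V → Bool} {v : V}
    (hv : boxStep G r H C v = true) :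
    r ≤ G.boundaryDegree H v + #{u ∈ H | G.Adj v u ∧ C u = true} := by
  simp only [boxStep, gStep, decide_eq_true_eq] at hv
  refine hv.trans ((card_le_card fun u => ?_).trans (card_union_le _ _))
  by_cases hu : u ∈ H <;> simp [hu]

end BoxedPercolation

section Counting

variable {V : Type*} {G : SimpleGraph V} {r : ℕ}

lemma card_filter_mem_add_card_filter_mem_compl (H : Finset V) (A : Set V) (C : V → Bool) :
    #{u ∈ {u ∈ H | u ∈ A} | C u = true} + #{u ∈ {u ∈ H | u ∈ Aᶜ} | C u = true} =
      #{u ∈ H | C u = true} := by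
  rw [filter_comm, filter_comm (· ∈ Aᶜ)]
  exact card_filter_add_card_filter_not _

variable [Fintype V]

theorem two_pow_le_card_of_boxStep_iterate (hG : G.ThinCutsSeparate) (C : V → Bool) (t : ℕ)
    (H : Finset V) (hH : ∀ w ∈ H, G.boundaryDegree H w + t < r) {v : V} (hv : v ∈ H)
    (hvt : (boxStep G r H)^[t] C v = true) : 2 ^ t ≤ #{u ∈ H | C u = true} := by
  induction t generalizing H v with
  | zero => simpa using card_pos.2 ⟨v, mem_filter.2 ⟨hv, hvt⟩⟩
  | succ t ih =>
    rw [Function.iterate_succ_apply'] at hvt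
    set X := (boxStep G r H)^[t] C
    have hblack := le_boundaryDegree_add_of_boxStep hvt
    have two_black : 1 < #{u ∈ H | G.Adj v u ∧ X u = true} := by
      have := hH v hv
      omega
    obtain ⟨u₁, hu₁, u₂, hu₂, hne⟩ := one_lt_card.1 two_black
    simp only [mem_filter] at hu₁ hu₂
    obtain ⟨A, hA, hu₁A, hu₂A⟩ := hG hne
    have side : ∀ B : Set V, G.IsThinCut B → ∀ u ∈ H, u ∈ B → X u = true →
        2 ^ t ≤ #{x ∈ {x ∈ H | x ∈ B} | C x = true} := by
      intro B hB u hu huB hXu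
      refine ih _ (fun w hw => ?_) (mem_filter.2 ⟨hu, huB⟩)
        (Bool.le_iff_imp.1 (boxStep_iterate_le_of_subset (filter_subset _ H) C t u) hXu)
      have := hB.boundaryDegree_filter_le H (mem_filter.1 hw).2
      have := hH w (mem_filter.1 hw).1
      omega
    have h₁ := side A hA u₁ hu₁.1 hu₁A hu₁.2.2
    have h₂ := side Aᶜ hA.compl u₂ hu₂.1 hu₂A hu₂.2.2
    rw [← card_filter_mem_add_card_filter_mem_compl H A C, pow_succ]
    simp only [Set.mem_compl_iff] at h₂ ⊢
    omega

theorem two_pow_le_card_of_gStep_iterate (hG : G.ThinCutsSeparate) {C : V → Bool} {t : ℕ}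
    (ht : t < r) {v : V} (hvt : (gStep G r)^[t] C v = true) :
    2 ^ t ≤ #{u | C u = true} := by
  rw [← boxStep_univ] at hvt
  refine two_pow_le_card_of_boxStep_iterate hG C t univ (fun w _ => ?_) (mem_univ v) hvt
  simpa [SimpleGraph.boundaryDegree] using ht

end Counting

lemma ZMod.natCast_ne_zero_of_pos_of_lt {n k : ℕ} (hk : 0 < k) (hkn : k < n) :
    (k : ZMod n) ≠ 0 := by
  rw [Ne, ZMod.natCast_eq_zero_iff]
  exact fun h => (Nat.le_of_dvd hk h).not_gt hkn

section Torus

variable {d L : ℕ}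

def torusSlab (j : Fin d) (a : ZMod L) : Set (TorusV d L) :=
  {w | w j = a ∨ w j = a + 1}

lemma torusGraph_adj_eq_update {w x : TorusV d L} (h : (torusGraph d L).Adj w x) {j : Fin d}
    (hj : x j ≠ w j) : x = Function.update w j (x j) ∧ (x j = w j + 1 ∨ x j = w j - 1) := by
  obtain ⟨-, i, hi, hk⟩ := h
  obtain rfl : i = j := by
    by_contra hij
    exact hj (hk j (Ne.symm hij))
  refine ⟨funext fun k => ?_, hi⟩
  by_cases hki : k = i
  · subst hki
    simp
  · simp [hki, hk k hki]

lemma isThinCut_torusSlab (h3 : (3 : ZMod L) ≠ 0) (j : Fin d) (a : ZMod L) :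
    (torusGraph d L).IsThinCut (torusSlab j a) := by
  intro w x y hx hy hxA hyA
  have across : ∀ {z}, (torusGraph d L).Adj w z →
      (z ∈ torusSlab j a ↔ w ∉ torusSlab j a) →
      z = Function.update w j (z j) ∧ (z j = w j + 1 ∨ z j = w j - 1) := by
    intro z hz hzA
    refine torusGraph_adj_eq_update hz fun he => ?_
    simp only [torusSlab, Set.mem_ofPred_eq, he] at hzA
    tauto
  obtain ⟨hx', hxj⟩ := across hx hxA
  obtain ⟨hy', hyj⟩ := across hy hyA
  rw [hx', hy']
  congr 1
  -- `w j + 1` and `w j - 1` cannot both lie across the slab unless `3 = 0`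
  simp only [torusSlab, Set.mem_ofPred_eq] at hxA hyA
  grind

lemma torusGraph_thinCutsSeparate (h2 : (2 : ZMod L) ≠ 0) (h3 : (3 : ZMod L) ≠ 0) :
    (torusGraph d L).ThinCutsSeparate := by
  intro u₁ u₂ hne
  obtain ⟨j, hj⟩ := Function.ne_iff.1 hne
  by_cases hnext : u₂ j = u₁ j + 1
  · refine ⟨torusSlab j (u₁ j - 1), isThinCut_torusSlab h3 _ _, Or.inr (by ring), ?_⟩
    rintro (h | h)
    · exact h2 (by linear_combination h - hnext)
    · exact hj (by rw [h]; ring)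
  · refine ⟨torusSlab j (u₁ j), isThinCut_torusSlab h3 _ _, Or.inl rfl, ?_⟩
    rintro (h | h)
    · exact hj h.symm
    · exact hnext h

end Torus

theorem stmt_7_general (d r : ℕ) (hr : 2 ≤ r) :
    ∃ T L0 : ℕ, ∀ (L : ℕ) [NeZero L], L0 ≤ L →
      ∀ C : TorusV d L → Bool,
        (Finset.univ.filter (fun v => C v = true)).card < 2 ^ (r - 1) →
        ∃ t ≤ T, ∀ v, (gStep (torusGraph d L) r)^[t] C v = false := by
  refine ⟨r - 1, 4, fun L _ hL C hC => ⟨r - 1, le_rfl, fun v => ?_⟩⟩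
  have h2 : (2 : ZMod L) ≠ 0 := by
    exact_mod_cast ZMod.natCast_ne_zero_of_pos_of_lt two_pos (by omega)
  have h3 : (3 : ZMod L) ≠ 0 := by
    exact_mod_cast ZMod.natCast_ne_zero_of_pos_of_lt three_pos (by omega)
  by_contra hv
  exact (two_pow_le_card_of_gStep_iterate (torusGraph_thinCutsSeparate h2 h3) (by omega)
    (Bool.not_eq_false _ ▸ hv)).not_gt hC

theorem stmt_7 (d r : ℕ) (hr : 2 ≤ r) (hrd : r ≤ d) :
    ∃ T L0 : ℕ, ∀ (L : ℕ) [NeZero L], L0 ≤ L →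
      ∀ C : TorusV d L → Bool,
        (Finset.univ.filter (fun v => C v = true)).card < 2 ^ (r - 1) →
        ∃ t ≤ T, ∀ v, (gStep (torusGraph d L) r)^[t] C v = false :=
  stmt_7_general d r hr
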